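/- The map ζ intertwines the multiplication of H: as k-linear maps H ⊗ H ⊗ A → A ⊗ H one has ζ ∘ (μ_H ⊗ id_A) = (id_A ⊗ μ_H) ∘ (ζ ⊗ id_H) ∘ (id_H ⊗ ζ). Equivalently, for all h, h' ∈ H and a ∈ A, writing ζ(h' ⊗ a) = Σ aᵢ ⊗ hᵢ, one has ζ(h h' ⊗ a) = Σ (id_A ⊗ μ_H)(ζ(h ⊗ aᵢ) ⊗ hᵢ). -/

import Mathlib

open TensorProduct

noncomputable section

universe u

variable {k A H X : Type u} [Field k]
  [Ring A] [Ring H] [Ring X]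
  [Bialgebra k A] [Bialgebra k H] [Bialgebra k X]

/-- ζ : H ⊗ A → A ⊗ H, ζ(h ⊗ a) = ξ⁻¹(j_H(h) · j_A(a)). -/
def zetaF (jA : A →ₐc[k] X) (jH : H →ₐc[k] X) (ξ : (A ⊗[k] H) ≃ₗ[k] X) :
    H ⊗[k] A →ₗ[k] A ⊗[k] H :=
  ξ.symm.toLinearMap ∘ₗ LinearMap.mul' k X ∘ₗ
    TensorProduct.map (jH : H →ₗ[k] X) (jA : A →ₗ[k] X)

/- Since `ξ` is injective, it suffices to compare both sides after applying `ξ`. On `A ⊗ H`,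
`ξ` turns right multiplication by `h` (through `μ_H`) into right multiplication by `jH h`, and,
because `ξ ∘ ζ = μ_X ∘ (jH ⊗ jA)`, left multiplication by `h` (through `ζ`) into left
multiplication by `jH h`. Both sides of the identity then become `jH h * jH h' * jA a`. -/

section Factorisation

variable {R M S T F G : Type*} [CommSemiring R] [AddCommMonoid M] [Module R M]
  [Semiring S] [Algebra R S] [Semiring T]
  [FunLike F (M ⊗[R] S) T] [AddMonoidHomClass F (M ⊗[R] S) T] [FunLike G S T] [MulHomClass G S T]
  {f : M → T} {g : G} {ξ : F}

theorem apply_map_id_mul'_assoc_tmul (hξ : ∀ m s, ξ (m ⊗ₜ s) = f m * g s)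
    (t : M ⊗[R] S) (s : S) :
    ξ (map LinearMap.id (LinearMap.mul' R S) (TensorProduct.assoc R M S S (t ⊗ₜ s))) =
      ξ t * g s := by
  induction t using TensorProduct.induction_on with
  | zero => simp
  | tmul m s' => simp [hξ, mul_assoc]
  | add x y hx hy => simp only [add_tmul, map_add, hx, hy, add_mul]

theorem apply_map_id_mul'_assoc_map_assoc_symm_tmul (hξ : ∀ m s, ξ (m ⊗ₜ s) = f m * g s)
    {ζ : S ⊗[R] M →ₗ[R] M ⊗[R] S} (hζ : ∀ s m, ξ (ζ (s ⊗ₜ m)) = g s * f m)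
    (s : S) (t : M ⊗[R] S) :
    ξ (map LinearMap.id (LinearMap.mul' R S) (TensorProduct.assoc R M S S
        (map ζ LinearMap.id ((TensorProduct.assoc R S M S).symm (s ⊗ₜ t))))) = g s * ξ t := by
  induction t using TensorProduct.induction_on with
  | zero => simp
  | tmul m s' =>
    rw [TensorProduct.assoc_symm_tmul, map_tmul, apply_map_id_mul'_assoc_tmul hξ, hζ, hξ,
      LinearMap.id_apply, mul_assoc]
  | add x y hx hy => simp only [tmul_add, map_add, hx, hy, mul_add]

end Factorisation

theorem xi_zetaF_tmul (jA : A →ₐc[k] X) (jH : H →ₐc[k] X) (ξ : (A ⊗[k] H) ≃ₗ[k] X)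
    (h : H) (a : A) : ξ (zetaF jA jH ξ (h ⊗ₜ a)) = jH h * jA a := by
  simp [zetaF]

theorem zeta_mul_H (jA : A →ₐc[k] X) (jH : H →ₐc[k] X) (ξ : (A ⊗[k] H) ≃ₗ[k] X)
    (hξ : ∀ (a : A) (h : H), ξ (a ⊗ₜ[k] h) = jA a * jH h) :
    zetaF jA jH ξ ∘ₗ TensorProduct.map (LinearMap.mul' k H) LinearMap.id
      = TensorProduct.map LinearMap.id (LinearMap.mul' k H) ∘ₗ
        (TensorProduct.assoc k A H H).toLinearMap ∘ₗ
        TensorProduct.map (zetaF jA jH ξ) LinearMap.id ∘ₗ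
        (TensorProduct.assoc k H A H).symm.toLinearMap ∘ₗ
        TensorProduct.map LinearMap.id (zetaF jA jH ξ) ∘ₗ
        (TensorProduct.assoc k H H A).toLinearMap := by
  refine TensorProduct.ext_threefold fun h h' a => ξ.injective ?_
  simp only [LinearMap.comp_apply, map_tmul, LinearEquiv.coe_coe, TensorProduct.assoc_tmul,
    LinearMap.id_apply, LinearMap.mul'_apply]
  rw [xi_zetaF_tmul, apply_map_id_mul'_assoc_map_assoc_symm_tmul hξ (xi_zetaF_tmul jA jH ξ),
    xi_zetaF_tmul, map_mul, mul_assoc]
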